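/- arXiv:2307.14801 — 2 statements merged into one kernel-verified Lean document; each statement's English description precedes it below -/
import Mathlib

section
/- Let n and t be natural numbers with 3*t < n, let W be a type, let C be a finset of Fin n with cardinality at least n − t, and let Mₐ, M_b : Fin n → W be two vectors that agree on C (for every j ∈ C, Mₐ j = M_b j). Suppose there are values vₐ, v_b : W such that the finset {j : Fin n | Mₐ j = vₐ} has cardinality at least n − t and the finset {j : Fin n | M_b j = v_b} has cardinality at least n − t. Then vₐ = v_b. -/
theorem atMostOneV (n t : ℕ) (h : 3 * t < n) (W : Type*) [DecidableEq W]
    (C : Finset (Fin n)) (hC : n - t ≤ C.card)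
    (Ma Mb : Fin n → W) (hagree : ∀ j ∈ C, Ma j = Mb j)
    (va vb : W)
    (hva : n - t ≤ (Finset.univ.filter (fun j => Ma j = va)).card)
    (hvb : n - t ≤ (Finset.univ.filter (fun j => Mb j = vb)).card) :
    va = vb := by
  set A := Finset.univ.filter (fun j => Ma j = va) with hA
  set B := Finset.univ.filter (fun j => Mb j = vb) with hB
  have hAcard : A.card ≤ n := by simpa using Finset.card_le_univ A
  have hABu : (A ∪ B).card ≤ n := by simpa using Finset.card_le_univ (A ∪ B)
  have hABCu : ((A ∩ B) ∪ C).card ≤ n := by simpa using Finset.card_le_univ ((A ∩ B) ∪ C)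
  have h1 : A.card + B.card = (A ∪ B).card + (A ∩ B).card :=
    (Finset.card_union_add_card_inter A B).symm
  have h2 : (A ∩ B).card + C.card = ((A ∩ B) ∪ C).card + ((A ∩ B) ∩ C).card :=
    (Finset.card_union_add_card_inter (A ∩ B) C).symm
  have hne : ((A ∩ B) ∩ C).Nonempty := by
    rw [← Finset.card_pos]
    omega
  obtain ⟨j, hj⟩ := hne
  simp only [Finset.mem_inter, hA, hB, Finset.mem_filter] at hj
  obtain ⟨⟨⟨-, ha⟩, -, hb⟩, hc⟩ := hj
  rw [← ha, hagree j hc, hb]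
end

section
/- Let n and t be natural numbers with 3*t < n, let W be a type, let F be a finset of Fin n of cardinality at most t, let x : W, and let M : Fin n → Option W be a vector such that for every j ∉ F, either M j = none or M j = some x. If v : W is a value such that the finset {j : Fin n | M j = some v} has cardinality at least n − t, then v = x. -/
theorem atLeastOneValSame_key (n t : ℕ) (h : 3 * t < n) (W : Type*) [DecidableEq W]
    (F : Finset (Fin n)) (hF : F.card ≤ t)
    (x : W) (M : Fin n → Option W)
    (hcorrect : ∀ j, j ∉ F → M j = none ∨ M j = some x)
    (v : W)
    (hv : n - t ≤ (Finset.univ.filter (fun j => M j = some v)).card) :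
    v = x := by
  by_contra hvx
  have hsub : (Finset.univ.filter (fun j => M j = some v)) ⊆ F := by
    intro j hj
    simp only [Finset.mem_filter] at hj
    by_contra hjF
    rcases hcorrect j hjF with h1 | h1 <;> rw [h1] at hj
    · simp at hj
    · exact hvx (Option.some.injEq .. ▸ hj.2.symm ▸ rfl)
  have := Finset.card_le_card hsub
  omega
end
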